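/- Let J be as given, with coding graph E_J. Then the labeled graph (E_J, L_J) is right-resolving: no vertex of E_J emits two distinct edges with the same L_J-label. In fact, if a vertex of E_J emits two distinct edges, then both edges are positive and their L_J-labels α, α' are distinct paths with disjoint cylinder sets Z(α) ∩ Z(α') = ∅ (in particular neither label is a prefix of the other). -/

import Mathlib

/-- A finite directed multigraph. -/
structure FinGraph where
  V : Type
  E : Type
  fintV : Fintype V
  fintE : Fintype E
  src : E → V
  rng : E → V

variable {G : FinGraph}

/-- A finite path in the graph `G`: a source vertex together with a compatible
list of edges (a vertex is a path of length 0). -/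
structure FPath (G : FinGraph) where
  source : G.V
  edges : List G.E
  head_src : ∀ e ∈ edges.head?, G.src e = source
  chain : edges.Chain' fun e f => G.rng e = G.src f

/-- The range (terminal vertex) of a finite path. -/
def FPath.range (p : FPath G) : G.V :=
  p.edges.getLast?.elim p.source G.rng

/-- The length-0 path at a vertex. -/
def FPath.nil (G : FinGraph) (v : G.V) : FPath G :=
  ⟨v, [], by simp, List.IsChain.nil⟩

/-- `p.Prefix q` : the path `p` is an initial segment of the path `q`. -/
def FPath.Prefix (p q : FPath G) : Prop :=
  p.source = q.source ∧ p.edges <+: q.edges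

/-- The path obtained by removing the first edge (the tail `κ` of `ν = eκ`). -/
def FPath.tail (p : FPath G) : FPath G where
  source := p.edges.head?.elim p.source G.rng
  edges := p.edges.tail
  head_src := by
    cases hp : p.edges with
    | nil => simp
    | cons a l =>
      have h := p.chain
      rw [hp] at h
      intro e he
      simp only [hp, List.head?_cons, Option.elim, List.tail_cons] at he ⊢
      cases l with
      | nil => simp at he
      | cons b l' =>
        have h2 : List.IsChain (fun e f => G.rng e = G.src f) (a :: b :: l') := h
        simp at he
        subst he
        exact (List.isChain_cons_cons.mp h2).1.symm
  chain := p.chain.tail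

/-- An infinite path in the graph `G`. -/
structure IPath (G : FinGraph) where
  edges : ℕ → G.E
  chain : ∀ i, G.rng (edges i) = G.src (edges (i + 1))

/-- The source vertex of an infinite path. -/
def IPath.source (p : IPath G) : G.V := G.src (p.edges 0)

/-- The cylinder set `Z(p)` of a finite path `p`: all infinite paths with prefix `p`. -/
def cylinder (p : FPath G) : Set (IPath G) :=
  {q | q.source = p.source ∧ ∀ i, (h : i < p.edges.length) → q.edges i = p.edges.get ⟨i, h⟩}

/-- A finite collection `S` of finite paths is a partition of the path `ν`:
the cylinder sets are pairwise disjoint with union `Z(ν)`. -/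
def IsPartitionOfPath (S : Set (FPath G)) (ν : FPath G) : Prop :=
  S.Finite ∧ (∀ p ∈ S, ∀ q ∈ S, p ≠ q → cylinder p ∩ cylinder q = ∅) ∧
    (⋃ p ∈ S, cylinder p) = cylinder ν

/-- A finite collection `S` of finite paths is a partition of the vertex `v`. -/
def IsPartitionOf (S : Set (FPath G)) (v : G.V) : Prop :=
  IsPartitionOfPath S (FPath.nil G v)

/-- Standing assumptions: no sinks, no sources, every cycle has an exit. -/
structure Standing (G : FinGraph) : Prop where
  no_sinks : ∀ v : G.V, ∃ e, G.src e = v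
  no_sources : ∀ v : G.V, ∃ e, G.rng e = v
  cycles_exit : ∀ p : FPath G, p.edges ≠ [] → p.range = p.source →
    ∃ e ∈ p.edges, ∃ f, f ≠ e ∧ G.src f = G.src e

/-- The combinatorial conditions making `u_J = Σ_{(μ,ν) ∈ J} S_μ S_ν^*` a unitary:
`J` is finite, `s(μ) = s(ν)`, `r(μ) = r(ν)`, `|ν| ≥ 1` for all `(μ,ν) ∈ J`, and both
families of cylinder sets are pairwise disjoint with union all of `E^∞`. -/
structure IsUnitaryJ (G : FinGraph) (J : Set (FPath G × FPath G)) : Prop where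
  finite : J.Finite
  src_eq : ∀ p ∈ J, (Prod.fst p).source = (Prod.snd p).source
  rng_eq : ∀ p ∈ J, FPath.range (Prod.fst p) = FPath.range (Prod.snd p)
  ne_nil : ∀ p ∈ J, (Prod.snd p).edges ≠ []
  disj₁ : ∀ p ∈ J, ∀ q ∈ J, p ≠ q → cylinder (Prod.fst p) ∩ cylinder (Prod.fst q) = ∅
  union₁ : (⋃ p ∈ J, cylinder (Prod.fst p)) = Set.univ
  disj₂ : ∀ p ∈ J, ∀ q ∈ J, p ≠ q → cylinder (Prod.snd p) ∩ cylinder (Prod.snd q) = ∅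
  union₂ : (⋃ p ∈ J, cylinder (Prod.snd p)) = Set.univ

/-- Adjacency in the coding graph `E_J`: there is an edge from `p = (μ₁, e₁ν₁)` to
`q = (μ₂, e₂ν₂)` iff the tail `ν₁` and `μ₂` are prefix-comparable
(the combinatorial content of `S_{ν₁}^* S_{μ₂} ≠ 0`). -/
def CGAdj (p q : FPath G × FPath G) : Prop :=
  FPath.Prefix p.2.tail q.1 ∨ FPath.Prefix q.1 p.2.tail

/-- The degree `|μ₂| − |ν₁|` of the coding-graph edge from `p` to `q`. -/
def cgDeg (p q : FPath G × FPath G) : ℤ :=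
  (q.1.edges.length : ℤ) - (p.2.tail.edges.length : ℤ)

/-- `IsAppend p q r` : the path `r` is the concatenation `p q`. -/
def IsAppend (p q r : FPath G) : Prop :=
  r.source = p.source ∧ q.source = p.range ∧ r.edges = p.edges ++ q.edges

/-- A finite path in the coding graph `E_J`, recorded by the (nonempty) list of
vertices of `J` it visits (a single vertex is a path of length 0). -/
structure CGPath (G : FinGraph) (J : Set (FPath G × FPath G)) where
  verts : List (FPath G × FPath G)
  ne : verts ≠ []
  mem : ∀ v ∈ verts, v ∈ J
  adj : verts.Chain' CGAdj

/-- The `E`-label of a path in the coding graph: the list of distinguished first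
edges `e` of the second coordinates of the vertices it visits. -/
def CGPath.elabel {J : Set (FPath G × FPath G)} (ω : CGPath G J) : List G.E :=
  ω.verts.filterMap fun v => v.2.edges.head?

/-- `IsLabelOf l γ` : `γ` is the `L_J`-label of the coding-graph path visiting the
vertices in the list `l` (all of whose edges are non-negative): the concatenation of
the `L_J`-labels of its edges, and the empty path at `r(μ)` for the length-0 path
at a vertex `(μ, eν)`. -/
inductive IsLabelOf : List (FPath G × FPath G) → FPath G → Prop
  | single (p : FPath G × FPath G) (γ : FPath G) :
      γ.edges = [] → γ.source = FPath.range p.1 → IsLabelOf [p] γ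
  | cons (p q : FPath G × FPath G) (rest : List (FPath G × FPath G)) (α γ δ : FPath G) :
      IsAppend p.2.tail α q.1 → IsLabelOf (q :: rest) γ → IsAppend α γ δ →
      IsLabelOf (p :: q :: rest) δ

/-- Every edge of the coding graph `E_J` is non-negative. -/
def AllEdgesNonneg (G : FinGraph) (J : Set (FPath G × FPath G)) : Prop :=
  ∀ p ∈ J, ∀ q ∈ J, CGAdj p q → 0 ≤ cgDeg p q

/-- The coding graph `E_J` contains a non-positive cycle. -/
def HasNonposCycle (G : FinGraph) (J : Set (FPath G × FPath G)) : Prop :=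
  ∃ ω : CGPath G J, 2 ≤ ω.verts.length ∧ ω.verts.getLast ω.ne = ω.verts.head ω.ne ∧
    ω.verts.Chain' fun p q => cgDeg p q ≤ 0

/-- All outgoing edges of the vertex `p` in the coding graph `E_J` are positive. -/
def AllOutPositive (G : FinGraph) (J : Set (FPath G × FPath G))
    (p : FPath G × FPath G) : Prop :=
  ∀ q ∈ J, CGAdj p q → 0 < cgDeg p q

/-- `IsSnoc p f q` : the path `q` is `p` extended by the single edge `f`. -/
def IsSnoc (p : FPath G) (f : G.E) (q : FPath G) : Prop :=
  q.source = p.source ∧ q.edges = p.edges ++ [f]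

/-- `IsSplitting G J p J'` : `J'` is the splitting of `J` at the vertex `p = (μ, eν)`,
i.e. `J' = (J ∖ {(μ,eν)}) ∪ {(μf, eνf) : f ∈ E¹, s(f) = r(μ)}`. -/
def IsSplitting (G : FinGraph) (J : Set (FPath G × FPath G)) (p : FPath G × FPath G)
    (J' : Set (FPath G × FPath G)) : Prop :=
  p ∈ J ∧ ∀ q, q ∈ J' ↔ (q ∈ J ∧ q ≠ p) ∨
    ∃ f, G.src f = FPath.range p.1 ∧ IsSnoc p.1 f q.1 ∧ IsSnoc p.2 f q.2

/-- The set of negative edges of the coding graph `E_J`. -/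
def negEdgeSet (G : FinGraph) (J : Set (FPath G × FPath G)) :
    Set ((FPath G × FPath G) × (FPath G × FPath G)) :=
  {e | e.1 ∈ J ∧ e.2 ∈ J ∧ CGAdj e.1 e.2 ∧ cgDeg e.1 e.2 < 0}

/-- `IsFinalNeg G J p q ω d` : the edge from `p` to `q` in `E_J` is a final negative
edge with destination `d`, via the zero path `ω` from `q` to `d`; the height of the
edge is `ω.verts.length - 1`. -/
def IsFinalNeg (G : FinGraph) (J : Set (FPath G × FPath G))
    (p q : FPath G × FPath G) (ω : CGPath G J) (d : FPath G × FPath G) : Prop :=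
  p ∈ J ∧ q ∈ J ∧ CGAdj p q ∧ cgDeg p q < 0 ∧
    ω.verts.head ω.ne = q ∧ ω.verts.getLast ω.ne = d ∧
    (ω.verts.Chain' fun a b => cgDeg a b = 0) ∧ AllOutPositive G J d

/-- `(E_J, E)` is left-synchronizing with delay `m` : any two paths of length `m`
(i.e. with `m+1` vertices) in `E_J` with the same `E`-label have the same source. -/
def LeftSyncDelay (G : FinGraph) (J : Set (FPath G × FPath G)) (m : ℕ) : Prop :=
  ∀ ω ξ : CGPath G J, ω.verts.length = m + 1 → ξ.verts.length = m + 1 →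
    ω.elabel = ξ.elabel → ω.verts.head ω.ne = ξ.verts.head ξ.ne

/-- An infinite path in the coding graph `E_J`. -/
structure CGIPath (G : FinGraph) (J : Set (FPath G × FPath G)) where
  verts : ℕ → FPath G × FPath G
  mem : ∀ i, verts i ∈ J
  adj : ∀ i, CGAdj (verts i) (verts (i + 1))

/-- The infinite `E`-label of an infinite coding-graph path is the infinite path `α`. -/
def ELabelInf {J : Set (FPath G × FPath G)} (ω : CGIPath G J) (α : IPath G) : Prop :=
  ∀ i, (ω.verts i).2.edges.head? = some (α.edges i)

/-- A transducer with input alphabet `A`, output alphabet `B`, a finite state set,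
an initial state and a transition function. -/
structure Transducer (A B : Type) where
  S : Type
  finS : Finite S
  init : S
  tr : S → A → S × List B

/-- The state sequence of a transducer on an infinite input word. -/
def Transducer.states {A B : Type} (T : Transducer A B) (α : ℕ → A) : ℕ → T.S
  | 0 => T.init
  | n + 1 => (T.tr (T.states α n) (α n)).1

/-- The `n`-th output block of a transducer on an infinite input word. -/
def Transducer.outBlock {A B : Type} (T : Transducer A B) (α : ℕ → A) (n : ℕ) : List B :=
  (T.tr (T.states α n) (α n)).2

/-- The concatenation of the first `n` blocks of a sequence of finite words. -/
def joinUpTo {X : Type} (f : ℕ → List X) (n : ℕ) : List X :=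
  ((List.range n).map f).flatten

/-- Two infinite concatenations of sequences of finite words are equal. -/
def StreamsEq {X : Type} (f g : ℕ → List X) : Prop :=
  (∀ n, ∃ m, joinUpTo f n <+: joinUpTo g m) ∧ ∀ n, ∃ m, joinUpTo g n <+: joinUpTo f m

/-- The type of edges of the coding graph `E_J`. -/
def CGEdgeT (G : FinGraph) (J : Set (FPath G × FPath G)) : Type :=
  {e : (FPath G × FPath G) × (FPath G × FPath G) // e.1 ∈ J ∧ e.2 ∈ J ∧ CGAdj e.1 e.2}

/-- The sequence of edges of an infinite coding-graph path. -/
def CGIPath.edgeSeq {J : Set (FPath G × FPath G)} (ω : CGIPath G J) (i : ℕ) : CGEdgeT G J :=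
  ⟨(ω.verts i, ω.verts (i + 1)), ω.mem i, ω.mem (i + 1), ω.adj i⟩

/-!
In a graph without sinks every cylinder set is nonempty, so two cylinders are disjoint exactly
when the paths are incomparable for `≼`. Hence distinct `q, q' ∈ J` have incomparable first
coordinates. If the edge `p → q` had degree `≤ 0`, then `q.1 ≼ ν` for the tail `ν` of `p.2`;
as `q'.1` is comparable with `ν`, it would be comparable with `q.1`. Likewise comparable labels
`α, α'` would make `q.1 = να` and `q'.1 = να'` comparable.
-/

namespace FPath

lemma Prefix.trans {p q r : FPath G} (hpq : p.Prefix q) (hqr : q.Prefix r) : p.Prefix r :=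
  ⟨hpq.1.trans hqr.1, hpq.2.trans hqr.2⟩

lemma Prefix.comparable_of_comparable {p q r : FPath G} (hpq : p.Prefix q)
    (hqr : q.Prefix r ∨ r.Prefix q) : p.Prefix r ∨ r.Prefix p := by
  rcases hqr with hqr | hrq
  · exact .inl (hpq.trans hqr)
  · exact (List.prefix_or_prefix_of_prefix hpq.2 hrq.2).imp
      (fun h => ⟨hpq.1.trans hrq.1.symm, h⟩) (fun h => ⟨hrq.1.trans hpq.1.symm, h⟩)

section Extend

variable {next : G.V → G.E}

noncomputable def extendSeq (next : G.V → G.E) (p : FPath G) : ℕ → G.E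
  | 0 => if h : 0 < p.edges.length then p.edges[0] else next p.source
  | i + 1 => if h : i + 1 < p.edges.length then p.edges[i + 1]
      else next (G.rng (extendSeq next p i))

lemma extendSeq_of_lt (p : FPath G) {i : ℕ} (h : i < p.edges.length) :
    extendSeq next p i = p.edges[i] := by
  cases i <;> simp [extendSeq, h]

lemma src_extendSeq_zero (hnext : ∀ v, G.src (next v) = v) (p : FPath G) :
    G.src (extendSeq next p 0) = p.source := by
  by_cases h : 0 < p.edges.length
  · rw [extendSeq_of_lt p h]
    exact p.head_src _ (by simp [List.head?_eq_getElem?, h])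
  · simp [extendSeq, h, hnext]

lemma rng_extendSeq (hnext : ∀ v, G.src (next v) = v) (p : FPath G) (i : ℕ) :
    G.rng (extendSeq next p i) = G.src (extendSeq next p (i + 1)) := by
  by_cases h : i + 1 < p.edges.length
  · rw [extendSeq_of_lt p h, extendSeq_of_lt p (by omega)]
    exact List.isChain_iff_getElem.mp p.chain i h
  · simp [extendSeq, h, hnext]

noncomputable def extend (hnext : ∀ v, G.src (next v) = v) (p : FPath G) : IPath G :=
  ⟨extendSeq next p, rng_extendSeq hnext p⟩

lemma extend_mem_cylinder (hnext : ∀ v, G.src (next v) = v) (p : FPath G) :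
    p.extend hnext ∈ cylinder p :=
  ⟨src_extendSeq_zero hnext p, fun _ h => extendSeq_of_lt p h⟩

end Extend

end FPath

lemma cylinder_nonempty (hsinks : ∀ v : G.V, ∃ e, G.src e = v) (p : FPath G) :
    (cylinder p).Nonempty := by
  choose next hnext using hsinks
  exact ⟨p.extend hnext, p.extend_mem_cylinder hnext⟩

lemma cylinder_anti {p q : FPath G} (h : p.Prefix q) : cylinder q ⊆ cylinder p := by
  intro x ⟨hsrc, hedges⟩
  refine ⟨hsrc.trans h.1.symm, fun i hi => ?_⟩
  rw [hedges i (hi.trans_le h.2.length_le)]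
  exact (h.2.getElem hi).symm

lemma edges_prefix_of_mem_cylinder {p q : FPath G} {x : IPath G} (hp : x ∈ cylinder p)
    (hq : x ∈ cylinder q) (hle : p.edges.length ≤ q.edges.length) : p.edges <+: q.edges := by
  rw [List.prefix_iff_eq_take]
  refine List.ext_getElem (by simp [hle]) fun i h₁ h₂ => ?_
  have hx := (hp.2 i h₁).symm.trans (hq.2 i (h₁.trans_le hle))
  simpa using hx

lemma prefix_or_prefix_of_mem_cylinder {p q : FPath G} {x : IPath G} (hp : x ∈ cylinder p)
    (hq : x ∈ cylinder q) : p.Prefix q ∨ q.Prefix p := by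
  have hsrc : p.source = q.source := hp.1.symm.trans hq.1
  rcases le_total p.edges.length q.edges.length with hle | hle
  · exact .inl ⟨hsrc, edges_prefix_of_mem_cylinder hp hq hle⟩
  · exact .inr ⟨hsrc.symm, edges_prefix_of_mem_cylinder hq hp hle⟩

lemma cylinder_inter_eq_empty_iff (hsinks : ∀ v : G.V, ∃ e, G.src e = v) {p q : FPath G} :
    cylinder p ∩ cylinder q = ∅ ↔ ¬ (p.Prefix q ∨ q.Prefix p) := by
  refine ⟨fun h hcomp => ?_, fun h => ?_⟩
  · rcases hcomp with hpq | hqp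
    · obtain ⟨x, hx⟩ := cylinder_nonempty hsinks q
      exact h.subset ⟨cylinder_anti hpq hx, hx⟩
    · obtain ⟨x, hx⟩ := cylinder_nonempty hsinks p
      exact h.subset ⟨hx, cylinder_anti hqp hx⟩
  · exact Set.eq_empty_iff_forall_notMem.mpr fun x ⟨hp, hq⟩ =>
      h (prefix_or_prefix_of_mem_cylinder hp hq)

lemma IsAppend.prefix_of_prefix {ν α α' r r' : FPath G} (hr : IsAppend ν α r)
    (hr' : IsAppend ν α' r') (h : α.Prefix α') : r.Prefix r' :=
  ⟨hr.1.trans hr'.1.symm, by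
    rw [hr.2.2, hr'.2.2]
    exact (List.prefix_append_right_inj _).mpr h.2⟩

lemma CGAdj.prefix_of_cgDeg_nonpos {p q : FPath G × FPath G} (hadj : CGAdj p q)
    (hdeg : cgDeg p q ≤ 0) : q.1.Prefix p.2.tail := by
  rcases hadj with h | h
  · have hlen : p.2.tail.edges.length = q.1.edges.length :=
      le_antisymm h.2.length_le (by unfold cgDeg at hdeg; omega)
    exact ⟨h.1.symm, h.2.eq_of_length hlen ▸ List.prefix_refl _⟩
  · exact h

namespace IsUnitaryJ

variable {J : Set (FPath G × FPath G)}

lemma not_comparable_fst (hsinks : ∀ v : G.V, ∃ e, G.src e = v) (hJ : IsUnitaryJ G J)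
    {q q' : FPath G × FPath G} (hq : q ∈ J) (hq' : q' ∈ J) (hne : q ≠ q') :
    ¬ (q.1.Prefix q'.1 ∨ q'.1.Prefix q.1) :=
  (cylinder_inter_eq_empty_iff hsinks).mp (hJ.disj₁ q hq q' hq' hne)

lemma cgDeg_pos (hsinks : ∀ v : G.V, ∃ e, G.src e = v) (hJ : IsUnitaryJ G J)
    {p q q' : FPath G × FPath G} (hq : q ∈ J) (hq' : q' ∈ J) (hne : q ≠ q')
    (hadj : CGAdj p q) (hadj' : CGAdj p q') : 0 < cgDeg p q := by
  by_contra! hdeg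
  exact hJ.not_comparable_fst hsinks hq hq' hne
    ((hadj.prefix_of_cgDeg_nonpos hdeg).comparable_of_comparable hadj')

lemma cylinder_inter_label_eq_empty (hsinks : ∀ v : G.V, ∃ e, G.src e = v)
    (hJ : IsUnitaryJ G J) {ν α α' : FPath G} {q q' : FPath G × FPath G} (hq : q ∈ J)
    (hq' : q' ∈ J) (hne : q ≠ q') (hα : IsAppend ν α q.1) (hα' : IsAppend ν α' q'.1) :
    cylinder α ∩ cylinder α' = ∅ :=
  (cylinder_inter_eq_empty_iff hsinks).mpr fun hcomp => hJ.not_comparable_fst hsinks hq hq' hne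
    (hcomp.imp (hα.prefix_of_prefix hα') (hα'.prefix_of_prefix hα))

end IsUnitaryJ

/-- Corollary 3.5: `(E_J, L_J)` is right-resolving; in fact if a vertex
emits two distinct edges, both are positive and their `L_J`-labels are distinct with
disjoint cylinder sets. -/
theorem right_resolving (G : FinGraph) (hG : Standing G)
    (J : Set (FPath G × FPath G)) (hJ : IsUnitaryJ G J) :
    ∀ p ∈ J, ∀ q ∈ J, ∀ q' ∈ J, q ≠ q' → CGAdj p q → CGAdj p q' →
      0 < cgDeg p q ∧ 0 < cgDeg p q' ∧
      ∀ α α' : FPath G, IsAppend p.2.tail α q.1 → IsAppend p.2.tail α' q'.1 →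
        α ≠ α' ∧ cylinder α ∩ cylinder α' = ∅ := by
  intro p _ q hq q' hq' hne hadj hadj'
  refine ⟨hJ.cgDeg_pos hG.no_sinks hq hq' hne hadj hadj',
    hJ.cgDeg_pos hG.no_sinks hq' hq hne.symm hadj' hadj, fun α α' hα hα' => ?_⟩
  have hdisj := hJ.cylinder_inter_label_eq_empty hG.no_sinks hq hq' hne hα hα'
  refine ⟨fun heq => ?_, hdisj⟩
  subst heq
  rw [Set.inter_self] at hdisj
  exact (cylinder_nonempty hG.no_sinks α).ne_empty hdisj
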